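/- With F_{n,k} as the number of Frobenius seaweed data for sp_{2n} with exactly k central arcs (up to swap), one has F_{2m+1,m+1} = F_{2m,m} + 1 for all m ≥ 1. -/

import Mathlib

/-- The arc of a block starting at offset `o` of size `m`: the `k`-th nested arc
joins vertices `o+k` and `o+(m-1-k)` (0-based), for `2k+1 < m`. -/
def inBlockArc (o m i j : ℕ) : Prop :=
  ∃ k : ℕ, 2 * k + 1 < m ∧ i = o + k ∧ j = o + (m - 1 - k)

/-- Arcs determined by a composition, drawn block by block starting at offset `o`. -/
def arcs : List ℕ → ℕ → ℕ → ℕ → Prop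
  | [], _, _, _ => False
  | m :: rest, o, i, j => inBlockArc o m i j ∨ arcs rest (o + m) i j

/-- The type-A meander graph of the pair of compositions `(a | b)` on `n` vertices
(0-based): arcs of `a` above the line, arcs of `b` below. -/
def meanderA (n : ℕ) (a b : List ℕ) : SimpleGraph (Fin n) where
  Adj i j := i ≠ j ∧ (arcs a 0 i.val j.val ∨ arcs a 0 j.val i.val ∨
      arcs b 0 i.val j.val ∨ arcs b 0 j.val i.val)
  symm := by
    constructor
    intro i j h
    exact ⟨Ne.symm h.1, by tauto⟩
  loopless := by
    constructor
    intro i h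
    exact h.1 rfl

/-- The symmetric composition `(a₁,…,a_s, 2d, a_s,…,a₁)` of `2n`, where
`d = n - Σ aᵢ` (a zero middle part is omitted). -/
def tildeComp (n : ℕ) (a : List ℕ) : List ℕ :=
  (a ++ [2 * (n - a.sum)] ++ a.reverse).filter (fun x => x != 0)

/-- The type-C meander graph `Γ^C_n(a|b)` on `2n` vertices. -/
def meanderC (n : ℕ) (a b : List ℕ) : SimpleGraph (Fin (2 * n)) :=
  meanderA (2 * n) (tildeComp n a) (tildeComp n b)

/-- The reflection `σ` sending vertex `i` to `2n + 1 - i` (0-based: `i ↦ 2n - 1 - i`). -/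
def sigmaRefl (n : ℕ) : Fin (2 * n) → Fin (2 * n) :=
  fun i => ⟨2 * n - 1 - i.val, by have := i.isLt; omega⟩

/-- A connected component is a cycle if every vertex in it has degree 2. -/
def IsCycleComp {V : Type*} (G : SimpleGraph V) (c : G.ConnectedComponent) : Prop :=
  ∀ v, G.connectedComponentMk v = c → (G.neighborSet v).ncard = 2

/-- A connected component is a segment if it is not a cycle. -/
def IsSegmentComp {V : Type*} (G : SimpleGraph V) (c : G.ConnectedComponent) : Prop :=
  ¬ IsCycleComp G c

/-- The number of cycles of a graph. -/
noncomputable def numCycles {V : Type*} (G : SimpleGraph V) : ℕ :=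
  {c : G.ConnectedComponent | IsCycleComp G c}.ncard

/-- The number of segments of a graph. -/
noncomputable def numSegments {V : Type*} (G : SimpleGraph V) : ℕ :=
  {c : G.ConnectedComponent | IsSegmentComp G c}.ncard

/-- A component of a type-C meander graph is `σ`-stable if `σ` maps it to itself. -/
def SigmaStable (n : ℕ) (G : SimpleGraph (Fin (2 * n))) (c : G.ConnectedComponent) : Prop :=
  ∀ v, G.connectedComponentMk v = c → G.connectedComponentMk (sigmaRefl n v) = c

/-- The number of non-`σ`-stable segments of `Γ^C_n(a|b)`. -/
noncomputable def numNonStableSegments (n : ℕ) (a b : List ℕ) : ℕ :=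
  {c : (meanderC n a b).ConnectedComponent |
    IsSegmentComp (meanderC n a b) c ∧ ¬ SigmaStable n (meanderC n a b) c}.ncard

/-- The topological index `T_n(a|b)` of `Γ^C_n(a|b)`:
(number of cycles) + ½·(number of non-`σ`-stable segments). -/
noncomputable def topIndex (n : ℕ) (a b : List ℕ) : ℚ :=
  (numCycles (meanderC n a b) : ℚ) + (numNonStableSegments n a b : ℚ) / 2

/-- A composition: all parts are positive. -/
def IsComposition (a : List ℕ) : Prop := ∀ x ∈ a, 0 < x

/-- A Frobenius seaweed datum for `sp_{2n}` whose meander graph has `k` central arcs: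
one of the compositions sums to `n`, the other to `n - k`, and `T_n(a|b) = 0`. -/
def FrobDatum (n k : ℕ) (a b : List ℕ) : Prop :=
  IsComposition a ∧ IsComposition b ∧ 1 ≤ k ∧ k ≤ n ∧
    ((a.sum = n - k ∧ b.sum = n) ∨ (b.sum = n - k ∧ a.sum = n)) ∧
    topIndex n a b = 0

/-- Frobenius seaweed data with `k` central arcs, up to swapping the two compositions. -/
def FSet (n k : ℕ) : Set (Sym2 (List ℕ)) :=
  {s | ∃ a b, s = s(a, b) ∧ FrobDatum n k a b}

/-- The number `F_{n,k}` of Frobenius seaweed data with `k` central arcs, up to swap. -/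
noncomputable def Fcount (n k : ℕ) : ℕ := (FSet n k).ncard

/-!
A datum of `F_{2m+1,m+1}` is `(a | b₀ ++ [p])` with `Σ a = m`, and `T = 0` says that every
component of `Γ^C` is a `σ`-stable segment. If `p = 1`, the central vertices `2m, 2m+1` are joined
only to each other, forming a `σ`-stable segment, and deleting them leaves `Γ^C_{2m}(a | b₀)`:
this is the bijection with the data of `F_{2m,m}`. If `2 ≤ p ≤ 2m`, two central arcs of `ã` and the
two copies of the last block of `b̃` close a square. If `p = 2m+1`, any arc `(i, j)` of `a` lies on
an octagon through its mirror image, so `a = (1,…,1)`, whose graph is a union of `σ`-stable paths.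
-/

open SimpleGraph

section Arcs

lemma arcs_append (l₁ l₂ : List ℕ) (o i j : ℕ) :
    arcs (l₁ ++ l₂) o i j ↔ arcs l₁ o i j ∨ arcs l₂ (o + l₁.sum) i j := by
  induction l₁ generalizing o with
  | nil => simp [arcs]
  | cons x xs ih => simp only [List.cons_append, arcs, ih, List.sum_cons, Nat.add_assoc, or_assoc]

lemma arcs_bounds {l : List ℕ} {o i j : ℕ} (h : arcs l o i j) :
    o ≤ i ∧ i < j ∧ j < o + l.sum := by
  induction l generalizing o with
  | nil => exact h.elim
  | cons x xs ih =>
    rcases h with ⟨k, hk, rfl, rfl⟩ | h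
    · simp only [List.sum_cons]; omega
    · have := ih h; simp only [List.sum_cons]; omega

lemma arcs_shift (l : List ℕ) (o d i j : ℕ) :
    arcs l (o + d) (i + d) (j + d) ↔ arcs l o i j := by
  induction l generalizing o with
  | nil => simp [arcs]
  | cons x xs ih =>
    simp only [arcs, inBlockArc, Nat.add_right_comm o d x, ih]
    refine or_congr ⟨?_, ?_⟩ Iff.rfl <;> rintro ⟨k, hk, hi, hj⟩ <;>
      exact ⟨k, hk, by omega, by omega⟩

lemma arcs_of_arcs_zero {l : List ℕ} {i j : ℕ} (o : ℕ) (h : arcs l 0 i j) :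
    arcs l o (i + o) (j + o) := by
  simpa using (arcs_shift l 0 o i j).2 h

lemma arcs_zero_of_arcs {l : List ℕ} {o i j : ℕ} (h : arcs l o i j) :
    arcs l 0 (i - o) (j - o) := by
  obtain ⟨hi, hij, -⟩ := arcs_bounds h
  rw [← arcs_shift l 0 o, Nat.sub_add_cancel hi, Nat.sub_add_cancel (by omega), Nat.zero_add]
  exact h

lemma arcs_eq_of_share {l : List ℕ} {o i j i' j' : ℕ} (h : arcs l o i j) (h' : arcs l o i' j')
    (hshare : i' = i ∨ i' = j ∨ j' = i ∨ j' = j) : i' = i ∧ j' = j := by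
  induction l generalizing o with
  | nil => exact h.elim
  | cons x xs ih =>
    rcases h with ⟨k, hk, hi, hj⟩ | h <;> rcases h' with ⟨k', hk', hi', hj'⟩ | h'
    · omega
    · have := arcs_bounds h'; omega
    · have := arcs_bounds h; omega
    · exact ih h h'

lemma not_arcs_replicate_one (r o i j : ℕ) : ¬ arcs (List.replicate r 1) o i j := by
  induction r generalizing o with
  | zero => exact id
  | succ r ih =>
    rintro (⟨k, hk, -⟩ | h)
    · omega
    · exact ih (o + 1) h

lemma arcs_reverse {l : List ℕ} {i j : ℕ} (h : arcs l 0 i j) :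
    arcs l.reverse 0 (l.sum - 1 - j) (l.sum - 1 - i) := by
  induction l generalizing i j with
  | nil => exact h.elim
  | cons x xs ih =>
    rw [List.reverse_cons, arcs_append, List.sum_reverse]
    rcases h with ⟨k, hk, rfl, rfl⟩ | h
    · exact Or.inr (Or.inl ⟨k, hk, by simp; omega, by simp; omega⟩)
    · have hb := arcs_bounds h
      simp only [Nat.zero_add] at h hb
      have := ih (arcs_zero_of_arcs h)
      refine Or.inl ?_
      rwa [List.sum_cons, show x + xs.sum - 1 - j = xs.sum - 1 - (j - x) by omega,
        show x + xs.sum - 1 - i = xs.sum - 1 - (i - x) by omega]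

lemma exists_arcs_of_two_le {l : List ℕ} {x : ℕ} (hx : x ∈ l) (h2 : 2 ≤ x) :
    ∃ i j, arcs l 0 i j := by
  induction l with
  | nil => simp at hx
  | cons y ys ih =>
    rcases List.mem_cons.1 hx with rfl | hx
    · exact ⟨0, x - 1, Or.inl ⟨0, by omega, rfl, by omega⟩⟩
    · obtain ⟨i, j, h⟩ := ih hx
      exact ⟨i + y, j + y, Or.inr (by simpa using arcs_of_arcs_zero y h)⟩

end Arcs

section TildeComp

lemma IsComposition.reverse {a : List ℕ} (h : IsComposition a) : IsComposition a.reverse :=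
  fun x hx => h x (List.mem_reverse.1 hx)

lemma IsComposition.append {a b : List ℕ} (ha : IsComposition a) (hb : IsComposition b) :
    IsComposition (a ++ b) := by
  intro x hx
  rcases List.mem_append.1 hx with h | h
  exacts [ha x h, hb x h]

lemma IsComposition.append_singleton {a : List ℕ} {p : ℕ} (ha : IsComposition a) (hp : 0 < p) :
    IsComposition (a ++ [p]) :=
  ha.append (by simpa [IsComposition] using hp)

lemma IsComposition.eq_nil {a : List ℕ} (ha : IsComposition a) (hs : a.sum = 0) : a = [] := by
  cases a with
  | nil => rfl
  | cons x xs => have := ha x (by simp); simp at hs; omega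

lemma tildeComp_of_sum_lt {n : ℕ} {a : List ℕ} (ha : IsComposition a) (h : a.sum < n) :
    tildeComp n a = a ++ 2 * (n - a.sum) :: a.reverse := by
  rw [tildeComp, List.append_assoc, List.singleton_append, List.filter_eq_self]
  intro x hx
  simp only [List.mem_append, List.mem_cons] at hx
  rcases hx with hx | rfl | hx
  · simpa using (ha x hx).ne'
  · simp; omega
  · simpa using (ha.reverse x hx).ne'

lemma tildeComp_of_sum_eq {n : ℕ} {a : List ℕ} (ha : IsComposition a) (h : a.sum = n) :
    tildeComp n a = a ++ a.reverse := by
  have hpos : ∀ l : List ℕ, IsComposition l → l.filter (fun x => x != 0) = l := fun l hl =>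
    List.filter_eq_self.2 fun x hx => by simpa using (hl x hx).ne'
  simp [tildeComp, h, List.filter_append, hpos a ha, hpos _ ha.reverse]

lemma arcs_tildeComp_of_sum_lt {n : ℕ} {a : List ℕ} (ha : IsComposition a) (h : a.sum < n)
    (x y : ℕ) :
    arcs (tildeComp n a) 0 x y ↔
      arcs a 0 x y ∨ inBlockArc a.sum (2 * (n - a.sum)) x y ∨
        arcs a.reverse (2 * n - a.sum) x y := by
  rw [tildeComp_of_sum_lt ha h, arcs_append]
  simp only [arcs, Nat.zero_add, show a.sum + 2 * (n - a.sum) = 2 * n - a.sum by omega]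

lemma arcs_tildeComp_of_sum_eq {n : ℕ} {a : List ℕ} (ha : IsComposition a) (h : a.sum = n)
    (x y : ℕ) :
    arcs (tildeComp n a) 0 x y ↔ arcs a 0 x y ∨ arcs a.reverse n x y := by
  rw [tildeComp_of_sum_eq ha h, arcs_append, Nat.zero_add, h]

lemma arcs_tildeComp_singleton (m x y : ℕ) :
    arcs (tildeComp (2 * m + 1) [2 * m + 1]) 0 x y ↔
      inBlockArc 0 (2 * m + 1) x y ∨ inBlockArc (2 * m + 1) (2 * m + 1) x y := by
  rw [arcs_tildeComp_of_sum_eq (by simp [IsComposition]) (by simp)]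
  simp [arcs]

end TildeComp

section StableSegments

variable {V : Type*} (G : SimpleGraph V) (σ : V → V)

/-- The component of `v` is a `σ`-stable segment. -/
def OnStableSegment (v : V) : Prop :=
  (∃ w, G.Reachable v w ∧ (G.neighborSet w).ncard ≠ 2) ∧ G.Reachable v (σ v)

variable {G σ}

lemma isCycleComp_connectedComponentMk_iff {v : V} :
    IsCycleComp G (G.connectedComponentMk v) ↔
      ∀ w, G.Reachable v w → (G.neighborSet w).ncard = 2 :=
  forall_congr' fun w => by rw [ConnectedComponent.eq, reachable_comm]

lemma numCycles_eq_zero_iff [Finite V] :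
    numCycles G = 0 ↔ ∀ v, ∃ w, G.Reachable v w ∧ (G.neighborSet w).ncard ≠ 2 := by
  rw [numCycles, Set.ncard_eq_zero (Set.toFinite _), Set.eq_empty_iff_forall_notMem]
  refine ⟨fun h v => ?_, fun h => ConnectedComponent.ind fun v => ?_⟩
  · simpa [isCycleComp_connectedComponentMk_iff] using h (G.connectedComponentMk v)
  · simpa [isCycleComp_connectedComponentMk_iff] using h v

lemma sigmaStable_iff_reachable {n : ℕ} {G : SimpleGraph (Fin (2 * n))} :
    (∀ c, SigmaStable n G c) ↔ ∀ v, G.Reachable v (sigmaRefl n v) := by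
  refine ⟨fun h v => ?_, fun h => ConnectedComponent.ind fun v w hw => ?_⟩
  · exact (ConnectedComponent.eq.1 (h _ v rfl)).symm
  · rw [← hw, ConnectedComponent.eq]
    exact (h w).symm

lemma topIndex_eq_zero_iff (n : ℕ) (a b : List ℕ) :
    topIndex n a b = 0 ↔ ∀ v, OnStableSegment (meanderC n a b) (sigmaRefl n) v := by
  have hsplit : topIndex n a b = 0 ↔
      numCycles (meanderC n a b) = 0 ∧ numNonStableSegments n a b = 0 := by
    rw [topIndex, add_eq_zero_iff_of_nonneg (by positivity) (by positivity)]
    simp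
  rw [hsplit, numCycles_eq_zero_iff, numNonStableSegments, Set.ncard_eq_zero (Set.toFinite _),
    Set.eq_empty_iff_forall_notMem]
  simp only [OnStableSegment, forall_and, Set.mem_ofPred_eq, not_and, not_not]
  refine and_congr_right fun hseg => ?_
  rw [← sigmaStable_iff_reachable]
  refine forall_congr' fun c => ⟨fun h => h ?_, fun h _ => h⟩
  induction c using ConnectedComponent.ind with
  | h v =>
    obtain ⟨w, hvw, hw⟩ := hseg v
    exact fun hcyc => hw (isCycleComp_connectedComponentMk_iff.1 hcyc w hvw)

lemma not_onStableSegment_of_forall_neighborSet_eq_pair (S : Set V)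
    (hS : ∀ u ∈ S, ∃ x ∈ S, ∃ y ∈ S, x ≠ y ∧ G.neighborSet u = {x, y}) {v : V}
    (hv : v ∈ S) :
    ¬ OnStableSegment G σ v := by
  rintro ⟨⟨w, ⟨p⟩, hw⟩, -⟩
  have hwS : w ∈ S := by
    induction p with
    | nil => exact hv
    | cons hadj _ ih =>
      obtain ⟨x, hx, y, hy, -, hnb⟩ := hS _ hv
      have : _ ∈ G.neighborSet _ := hadj
      rw [hnb] at this
      exact ih (by rcases this with rfl | rfl <;> assumption) hw
  obtain ⟨x, -, y, -, hxy, hnb⟩ := hS w hwS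
  exact hw (by rw [hnb, Set.ncard_pair hxy])

end StableSegments

section Embedding

variable {V W : Type*} {G : SimpleGraph V} {H : SimpleGraph W} {f : V → W}
  (hf : Function.Injective f) (hadj : ∀ u v, H.Adj (f u) (f v) ↔ G.Adj u v)
  (hclosed : ∀ u w, H.Adj (f u) w → w ∈ Set.range f)
include hadj hclosed

lemma reachable_map_iff {u : V} {w : W} :
    H.Reachable (f u) w ↔ ∃ v, f v = w ∧ G.Reachable u v := by
  constructor
  · rintro ⟨p⟩
    generalize hs : f u = s at p
    induction p generalizing u with
    | nil => exact ⟨u, hs, Reachable.refl u⟩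
    | cons hst _ ih =>
      subst hs
      obtain ⟨t, rfl⟩ := hclosed _ _ hst
      obtain ⟨v, hv, hr⟩ := ih rfl
      exact ⟨v, hv, ((hadj u t).1 hst).reachable.trans hr⟩
  · rintro ⟨v, rfl, hr⟩
    exact hr.map ⟨f, (hadj _ _).2⟩

lemma neighborSet_map (u : V) : H.neighborSet (f u) = f '' G.neighborSet u := by
  ext w
  constructor
  · intro hw
    obtain ⟨v, rfl⟩ := hclosed u w hw
    exact ⟨v, (hadj u v).1 hw, rfl⟩
  · rintro ⟨v, hv, rfl⟩
    exact (hadj u v).2 hv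

include hf in
lemma onStableSegment_map_iff {σ : V → V} {τ : W → W} (hσ : ∀ u, τ (f u) = f (σ u))
    (u : V) :
    OnStableSegment H τ (f u) ↔ OnStableSegment G σ u := by
  simp only [OnStableSegment, reachable_map_iff hadj hclosed, hσ, hf.eq_iff, exists_eq_left]
  refine and_congr_left fun _ => ⟨?_, ?_⟩
  · rintro ⟨_, ⟨v, rfl, hr⟩, hdeg⟩
    rw [neighborSet_map hadj hclosed, Set.ncard_image_of_injective _ hf] at hdeg
    exact ⟨v, hr, hdeg⟩
  · rintro ⟨v, hr, hdeg⟩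
    exact ⟨f v, ⟨v, rfl, hr⟩,
      by rwa [neighborSet_map hadj hclosed, Set.ncard_image_of_injective _ hf]⟩

end Embedding

section Meander

def IsArc (l : List ℕ) (i j : ℕ) : Prop := arcs l 0 i j ∨ arcs l 0 j i

variable {l : List ℕ} {i j k : ℕ}

lemma IsArc.symm (h : IsArc l i j) : IsArc l j i := Or.symm h

lemma IsArc.ne (h : IsArc l i j) : i ≠ j := by
  rcases h with h | h <;> have := arcs_bounds h <;> omega

lemma IsArc.unique (h : IsArc l i j) (h' : IsArc l i k) : j = k := by
  rcases h with h | h <;> rcases h' with h' | h' <;> have := arcs_eq_of_share h h' (by omega) <;>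
    have := arcs_bounds h <;> omega

lemma meanderA_adj_iff {n : ℕ} {A B : List ℕ} {u v : Fin n} :
    (meanderA n A B).Adj u v ↔ IsArc A u v ∨ IsArc B u v := by
  refine ⟨fun h => ?_, fun h => ⟨fun huv => ?_, ?_⟩⟩
  · rcases h.2 with h | h | h | h
    exacts [Or.inl (Or.inl h), Or.inl (Or.inr h), Or.inr (Or.inl h), Or.inr (Or.inr h)]
  · rcases h with h | h <;> exact h.ne (congrArg Fin.val huv)
  · rcases h with (h | h) | (h | h) <;> simp [h]

lemma meanderA_neighborSet_eq {n : ℕ} {A B : List ℕ} {v x y : Fin n} (hA : IsArc A v x)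
    (hB : IsArc B v y) : (meanderA n A B).neighborSet v = {x, y} := by
  ext w
  simp only [mem_neighborSet, meanderA_adj_iff, Set.mem_insert_iff, Set.mem_singleton_iff]
  refine ⟨?_, ?_⟩
  · rintro (h | h)
    · exact Or.inl (Fin.ext (h.unique hA))
    · exact Or.inr (Fin.ext (h.unique hB))
  · rintro (rfl | rfl)
    exacts [Or.inl hA, Or.inr hB]

end Meander

section ArcsOfTildeComp

variable {m : ℕ} {a : List ℕ}

lemma isArc_tildeComp_central (ha : IsComposition a) (hsa : a.sum = m) {x : ℕ} (hx : x ≤ m) :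
    IsArc (tildeComp (2 * m + 1) a) (2 * m - x) (2 * m + 1 + x) := by
  refine Or.inl ((arcs_tildeComp_of_sum_lt ha (by omega) _ _).2 (Or.inr (Or.inl ?_)))
  exact ⟨m - x, by omega, by omega, by omega⟩

lemma isArc_tildeComp_mirror (ha : IsComposition a) (hsa : a.sum = m) {i j : ℕ}
    (hij : arcs a 0 i j) : IsArc (tildeComp (2 * m + 1) a) (4 * m + 1 - j) (4 * m + 1 - i) := by
  obtain ⟨-, hij', hj⟩ := arcs_bounds hij
  rw [hsa, Nat.zero_add] at hj
  refine Or.inl ((arcs_tildeComp_of_sum_lt ha (by omega) _ _).2 (Or.inr (Or.inr ?_)))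
  have := arcs_of_arcs_zero (3 * m + 2) (arcs_reverse hij)
  rwa [hsa, show m - 1 - j + (3 * m + 2) = 4 * m + 1 - j by omega,
    show m - 1 - i + (3 * m + 2) = 4 * m + 1 - i by omega,
    show 3 * m + 2 = 2 * (2 * m + 1) - a.sum by omega] at this

lemma isArc_tildeComp_singleton {x : ℕ} (hx : x < m) :
    IsArc (tildeComp (2 * m + 1) [2 * m + 1]) x (2 * m - x) ∧
      IsArc (tildeComp (2 * m + 1) [2 * m + 1]) (2 * m + 1 + x) (4 * m + 1 - x) :=
  ⟨Or.inl ((arcs_tildeComp_singleton _ _ _).2 (Or.inl ⟨x, by omega, by omega, by omega⟩)),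
    Or.inl ((arcs_tildeComp_singleton _ _ _).2 (Or.inr ⟨x, by omega, by omega, by omega⟩))⟩

end ArcsOfTildeComp

section Surgery

def skipCentral (m x : ℕ) : ℕ := if x < 2 * m then x else x + 2

lemma skipCentral_cases (m x : ℕ) :
    (x < 2 * m ∧ skipCentral m x = x) ∨ (2 * m ≤ x ∧ skipCentral m x = x + 2) := by
  unfold skipCentral; split_ifs <;> omega

variable {m : ℕ} {a b : List ℕ}

lemma arcs_tildeComp_succ_skipCentral (hm : 1 ≤ m) (ha : IsComposition a) (hsa : a.sum = m)
    (x y : ℕ) :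
    arcs (tildeComp (2 * m + 1) a) 0 (skipCentral m x) (skipCentral m y) ↔
      arcs (tildeComp (2 * m) a) 0 x y := by
  -- the three parts of `ã` match separately: arcs of `a` end before `m`, those of `a.reverse`
  -- start after `3m`, and the central block gains exactly the arc `(2m, 2m+1)`
  rw [arcs_tildeComp_of_sum_lt ha (by omega), arcs_tildeComp_of_sum_lt ha (by omega), hsa,
    show 2 * (2 * m + 1) - m = 3 * m + 2 by omega, show 2 * (2 * m) - m = 3 * m by omega]
  rcases skipCentral_cases m x with ⟨hx, hX⟩ | ⟨hx, hX⟩ <;>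
    rcases skipCentral_cases m y with ⟨hy, hY⟩ | ⟨hy, hY⟩ <;>
    rw [hX, hY] <;>
    refine or_congr ?_ (or_congr ?_ ?_) <;>
    first
    | exact arcs_shift _ (3 * m) 2 x y
    | constructor <;> intro h <;>
      first
      | exact h
      | exact absurd (arcs_bounds h) (by omega)
      | (obtain ⟨k, hk, hi, hj⟩ := h; exact ⟨k, by omega, by omega, by omega⟩)

lemma arcs_tildeComp_append_one (hb : IsComposition b) (hsb : b.sum = 2 * m) (x y : ℕ) :
    arcs (tildeComp (2 * m + 1) (b ++ [1])) 0 x y ↔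
      arcs b 0 x y ∨ arcs b.reverse (2 * m + 2) x y := by
  rw [arcs_tildeComp_of_sum_eq (hb.append_singleton one_pos) (by simp [hsb]), arcs_append,
    List.reverse_concat]
  simp [arcs, inBlockArc, hsb, Nat.add_assoc]

lemma arcs_tildeComp_append_one_skipCentral (hb : IsComposition b) (hsb : b.sum = 2 * m)
    (x y : ℕ) :
    arcs (tildeComp (2 * m + 1) (b ++ [1])) 0 (skipCentral m x) (skipCentral m y) ↔
      arcs (tildeComp (2 * m) b) 0 x y := by
  rw [arcs_tildeComp_append_one hb hsb, arcs_tildeComp_of_sum_eq hb hsb]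
  rcases skipCentral_cases m x with ⟨hx, hX⟩ | ⟨hx, hX⟩ <;>
    rcases skipCentral_cases m y with ⟨hy, hY⟩ | ⟨hy, hY⟩ <;>
    rw [hX, hY] <;>
    refine or_congr ?_ ?_ <;>
    first
    | exact arcs_shift _ (2 * m) 2 x y
    | constructor <;> intro h <;>
      first
      | exact h
      | exact absurd (arcs_bounds h) (by simp [hsb]; omega)

lemma not_isArc_tildeComp_append_one_central (hb : IsComposition b) (hsb : b.sum = 2 * m)
    {x y : ℕ} (hx : x = 2 * m ∨ x = 2 * m + 1) :
    ¬ IsArc (tildeComp (2 * m + 1) (b ++ [1])) x y := by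
  have hrev : b.reverse.sum = 2 * m := by rw [List.sum_reverse, hsb]
  rintro (h | h) <;> rcases (arcs_tildeComp_append_one hb hsb _ _).1 h with h | h <;>
    have := arcs_bounds h <;> omega

def skipCentralFin (m : ℕ) (u : Fin (2 * (2 * m))) : Fin (2 * (2 * m + 1)) :=
  ⟨skipCentral m u, by rcases skipCentral_cases m u with h | h <;> omega⟩

lemma skipCentralFin_injective : Function.Injective (skipCentralFin m) := by
  intro u v h
  have := congrArg Fin.val h
  simp only [skipCentralFin] at this
  rcases skipCentral_cases m u with hu | hu <;> rcases skipCentral_cases m v with hv | hv <;>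
    exact Fin.ext (by omega)

lemma exists_skipCentralFin_eq (w : Fin (2 * (2 * m + 1)))
    (hw : ¬ (w.val = 2 * m ∨ w.val = 2 * m + 1)) :
    ∃ u, skipCentralFin m u = w := by
  by_cases h : w.val < 2 * m
  · exact ⟨⟨w, by omega⟩, Fin.ext (by simp [skipCentralFin, skipCentral, h])⟩
  · refine ⟨⟨w - 2, by omega⟩, Fin.ext ?_⟩
    simp [skipCentralFin, skipCentral, show ¬ (w.val - 2 < 2 * m) by omega]
    omega

lemma skipCentralFin_ne_central (u : Fin (2 * (2 * m))) :
    (skipCentralFin m u).val ≠ 2 * m ∧ (skipCentralFin m u).val ≠ 2 * m + 1 := by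
  simp only [skipCentralFin]
  rcases skipCentral_cases m u with h | h <;> omega

lemma sigmaRefl_skipCentralFin (u : Fin (2 * (2 * m))) :
    sigmaRefl (2 * m + 1) (skipCentralFin m u) = skipCentralFin m (sigmaRefl (2 * m) u) := by
  have := u.isLt
  ext
  simp only [sigmaRefl, skipCentralFin]
  rcases skipCentral_cases m u with h | h <;>
    rcases skipCentral_cases m (2 * (2 * m) - 1 - u) with h' | h' <;> omega

variable (hm : 1 ≤ m) (ha : IsComposition a) (hsa : a.sum = m) (hb : IsComposition b)
  (hsb : b.sum = 2 * m)
include hm ha hsa hb hsb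

lemma meanderC_adj_skipCentralFin (u v : Fin (2 * (2 * m))) :
    (meanderC (2 * m + 1) a (b ++ [1])).Adj (skipCentralFin m u) (skipCentralFin m v) ↔
      (meanderC (2 * m) a b).Adj u v := by
  simp only [meanderC, meanderA_adj_iff, IsArc, skipCentralFin,
    arcs_tildeComp_succ_skipCentral hm ha hsa, arcs_tildeComp_append_one_skipCentral hb hsb]

omit hm in
lemma meanderC_adj_central (w z : Fin (2 * (2 * m + 1)))
    (hw : w.val = 2 * m ∨ w.val = 2 * m + 1) :
    (meanderC (2 * m + 1) a (b ++ [1])).Adj w z ↔ z = sigmaRefl (2 * m + 1) w := by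
  have hc : IsArc (tildeComp (2 * m + 1) a) (2 * m) (2 * m + 1) := by
    simpa using isArc_tildeComp_central ha hsa (Nat.zero_le _)
  rw [meanderC, meanderA_adj_iff, or_iff_left (not_isArc_tildeComp_append_one_central hb hsb hw)]
  constructor
  · intro h
    ext
    simp only [sigmaRefl]
    rcases hw with hw | hw <;> rw [hw] at h ⊢
    · rw [h.unique hc]; omega
    · rw [h.unique hc.symm]; omega
  · rintro rfl
    simp only [sigmaRefl]
    rcases hw with hw | hw <;> rw [hw]
    · convert hc using 2; omega
    · convert hc.symm using 2; omega

omit hm in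
lemma onStableSegment_central (w : Fin (2 * (2 * m + 1)))
    (hw : w.val = 2 * m ∨ w.val = 2 * m + 1) :
    OnStableSegment (meanderC (2 * m + 1) a (b ++ [1])) (sigmaRefl (2 * m + 1)) w := by
  have hnb : (meanderC (2 * m + 1) a (b ++ [1])).neighborSet w = {sigmaRefl (2 * m + 1) w} := by
    ext z
    exact meanderC_adj_central ha hsa hb hsb w z hw
  refine ⟨⟨w, Reachable.refl w, by rw [hnb, Set.ncard_singleton]; omega⟩, ?_⟩
  exact ((meanderC_adj_central ha hsa hb hsb w _ hw).2 rfl).reachable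

theorem topIndex_append_one_eq_zero_iff :
    topIndex (2 * m + 1) a (b ++ [1]) = 0 ↔ topIndex (2 * m) a b = 0 := by
  rw [topIndex_eq_zero_iff, topIndex_eq_zero_iff]
  have hclosed : ∀ u w, (meanderC (2 * m + 1) a (b ++ [1])).Adj (skipCentralFin m u) w →
      w ∈ Set.range (skipCentralFin m) := by
    intro u w h
    by_cases hw : w.val = 2 * m ∨ w.val = 2 * m + 1
    · have hu := congrArg Fin.val ((meanderC_adj_central ha hsa hb hsb w _ hw).1 h.symm)
      have := skipCentralFin_ne_central u
      simp only [sigmaRefl] at hu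
      omega
    · exact exists_skipCentralFin_eq w hw
  have key := onStableSegment_map_iff skipCentralFin_injective
    (meanderC_adj_skipCentralFin hm ha hsa hb hsb) hclosed sigmaRefl_skipCentralFin
  refine ⟨fun h u => (key u).1 (h _), fun h w => ?_⟩
  by_cases hw : w.val = 2 * m ∨ w.val = 2 * m + 1
  · exact onStableSegment_central ha hsa hb hsb w hw
  · obtain ⟨u, rfl⟩ := exists_skipCentralFin_eq w hw
    exact (key u).2 (h u)

end Surgery

section Cycles

lemma not_onStableSegment_meanderA_of_cycle {n : ℕ} {A B : List ℕ} {σ : Fin n → Fin n}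
    (S : Set ℕ) (hSn : ∀ u ∈ S, u < n)
    (hS : ∀ u ∈ S, ∃ x ∈ S, ∃ y ∈ S, x ≠ y ∧ IsArc A u x ∧ IsArc B u y)
    {v : Fin n} (hv : v.val ∈ S) : ¬ OnStableSegment (meanderA n A B) σ v := by
  refine not_onStableSegment_of_forall_neighborSet_eq_pair {w : Fin n | w.val ∈ S} ?_ hv
  intro u hu
  obtain ⟨x, hx, y, hy, hxy, hA, hB⟩ := hS u hu
  exact ⟨⟨x, hSn x hx⟩, hx, ⟨y, hSn y hy⟩, hy, fun h => hxy (congrArg Fin.val h),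
    meanderA_neighborSet_eq hA hB⟩

variable {m : ℕ} {a : List ℕ}

lemma topIndex_append_ne_zero_of_two_le (ha : IsComposition a) (hsa : a.sum = m)
    {b₀ : List ℕ} {p : ℕ} (hb₀ : IsComposition b₀) (hp : 2 ≤ p) (hp' : p ≤ 2 * m)
    (hsb : b₀.sum + p = 2 * m + 1) :
    topIndex (2 * m + 1) a (b₀ ++ [p]) ≠ 0 := by
  rw [Ne, topIndex_eq_zero_iff]
  intro h
  -- The arc `(2m-l, 2m-k)` of the last block of `b̃`, its mirror image and two central arcs of `ã`
  -- form a square.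
  obtain ⟨l, hl⟩ : ∃ l, l = min (p - 1) m := ⟨_, rfl⟩
  obtain ⟨k, hk⟩ : ∃ k, k = p - 1 - l := ⟨_, rfl⟩
  have hB : ∀ x y, inBlockArc (2 * m + 1 - p) p x y ∨ inBlockArc (2 * m + 1) p x y →
      IsArc (tildeComp (2 * m + 1) (b₀ ++ [p])) x y := by
    intro x y hxy
    refine Or.inl ((arcs_tildeComp_of_sum_eq (hb₀.append_singleton (by omega))
      (by simp; omega) x y).2 ?_)
    rw [List.reverse_concat, arcs_append, show b₀.sum = 2 * m + 1 - p by omega]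
    simp only [arcs, Nat.zero_add, or_false]
    tauto
  have hAl := isArc_tildeComp_central ha hsa (x := l) (by omega)
  have hAk := isArc_tildeComp_central ha hsa (x := k) (by omega)
  have hBu := hB (2 * m - l) (2 * m - k) (Or.inl ⟨k, by omega, by omega, by omega⟩)
  have hBl := hB (2 * m + 1 + k) (2 * m + 1 + l) (Or.inr ⟨k, by omega, by omega, by omega⟩)
  refine not_onStableSegment_meanderA_of_cycle
    {2 * m - l, 2 * m - k, 2 * m + 1 + k, 2 * m + 1 + l} (by simp; omega) ?_
    (v := ⟨2 * m - l, by omega⟩) (by simp) (h _)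
  intro u hu
  rcases hu with hu | hu | hu | hu <;> rw [hu]
  · exact ⟨_, by simp, _, by simp, by omega, hAl, hBu⟩
  · exact ⟨_, by simp, _, by simp, by omega, hAk, hBu.symm⟩
  · exact ⟨_, by simp, _, by simp, by omega, hAk.symm, hBl⟩
  · exact ⟨_, by simp, _, by simp, by omega, hAl.symm, hBl.symm⟩

lemma topIndex_singleton_ne_zero_of_arcs (ha : IsComposition a) (hsa : a.sum = m)
    {i j : ℕ} (hij : arcs a 0 i j) : topIndex (2 * m + 1) a [2 * m + 1] ≠ 0 := by
  rw [Ne, topIndex_eq_zero_iff]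
  intro h
  obtain ⟨-, hij_lt, hjm⟩ := arcs_bounds hij
  rw [hsa, Nat.zero_add] at hjm
  have hAij : IsArc (tildeComp (2 * m + 1) a) i j :=
    Or.inl ((arcs_tildeComp_of_sum_lt ha (by omega) _ _).2 (Or.inl hij))
  have hAji := isArc_tildeComp_mirror ha hsa hij
  have hAi := isArc_tildeComp_central ha hsa (x := i) (by omega)
  have hAj := isArc_tildeComp_central ha hsa (x := j) (by omega)
  obtain ⟨hBi, hBi'⟩ := isArc_tildeComp_singleton (m := m) (x := i) (by omega)
  obtain ⟨hBj, hBj'⟩ := isArc_tildeComp_singleton (m := m) (x := j) hjm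
  refine not_onStableSegment_meanderA_of_cycle
    {i, j, 2 * m - j, 2 * m + 1 + j, 4 * m + 1 - j, 4 * m + 1 - i, 2 * m + 1 + i, 2 * m - i}
    (by simp; omega) ?_ (v := ⟨i, by omega⟩) (by simp) (h _)
  intro u hu
  rcases hu with hu | hu | hu | hu | hu | hu | hu | hu <;> rw [hu]
  · exact ⟨_, by simp, _, by simp, by omega, hAij, hBi⟩
  · exact ⟨_, by simp, _, by simp, by omega, hAij.symm, hBj⟩
  · exact ⟨_, by simp, _, by simp, by omega, hAj, hBj.symm⟩
  · exact ⟨_, by simp, _, by simp, by omega, hAj.symm, hBj'⟩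
  · exact ⟨_, by simp, _, by simp, by omega, hAji, hBj'.symm⟩
  · exact ⟨_, by simp, _, by simp, by omega, hAji.symm, hBi'.symm⟩
  · exact ⟨_, by simp, _, by simp, by omega, hAi.symm, hBi'⟩
  · exact ⟨_, by simp, _, by simp, by omega, hAi, hBi.symm⟩

end Cycles

section AllOnes

variable {m : ℕ}

lemma IsComposition.replicate_one (r : ℕ) : IsComposition (List.replicate r 1) := by
  intro x hx
  rw [List.eq_of_mem_replicate hx]
  exact one_pos

lemma sigmaRefl_sigmaRefl (n : ℕ) (v : Fin (2 * n)) : sigmaRefl n (sigmaRefl n v) = v := by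
  ext
  simp only [sigmaRefl]
  omega

lemma meanderC_replicate_one_adj_iff (u v : Fin (2 * (2 * m + 1))) :
    (meanderC (2 * m + 1) (List.replicate m 1) [2 * m + 1]).Adj u v ↔
      u.val ≠ v.val ∧ ((u.val + v.val = 4 * m + 1 ∧ m ≤ u.val ∧ m ≤ v.val) ∨
        u.val + v.val = 2 * m ∨ u.val + v.val = 6 * m + 2) := by
  have hA : ∀ x y, arcs (tildeComp (2 * m + 1) (List.replicate m 1)) 0 x y ↔
      inBlockArc m (2 * m + 2) x y := by
    intro x y
    rw [arcs_tildeComp_of_sum_lt (IsComposition.replicate_one m) (by simp; omega),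
      List.reverse_replicate]
    simp [not_arcs_replicate_one, show 2 * (2 * m + 1 - m) = 2 * m + 2 by omega]
  have := u.isLt
  have := v.isLt
  rw [meanderC, meanderA_adj_iff, IsArc, IsArc, hA, hA, arcs_tildeComp_singleton,
    arcs_tildeComp_singleton]
  simp only [inBlockArc]
  constructor
  · rintro ((⟨k, _⟩ | ⟨k, _⟩) | ((⟨k, _⟩ | ⟨k, _⟩) | (⟨k, _⟩ | ⟨k, _⟩))) <;>
      omega
  · rintro ⟨hne, h⟩
    rcases Nat.lt_or_gt_of_ne hne with hlt | hlt
    · rcases h with h | h | h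
      · exact Or.inl (Or.inl ⟨u - m, by omega, by omega, by omega⟩)
      · exact Or.inr (Or.inl (Or.inl ⟨u, by omega, by omega, by omega⟩))
      · exact Or.inr (Or.inl (Or.inr ⟨u - (2 * m + 1), by omega, by omega, by omega⟩))
    · rcases h with h | h | h
      · exact Or.inl (Or.inr ⟨v - m, by omega, by omega, by omega⟩)
      · exact Or.inr (Or.inr (Or.inl ⟨v, by omega, by omega, by omega⟩))
      · exact Or.inr (Or.inr (Or.inr ⟨v - (2 * m + 1), by omega, by omega, by omega⟩))

lemma topIndex_replicate_one :
    topIndex (2 * m + 1) (List.replicate m 1) [2 * m + 1] = 0 := by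
  set G := meanderC (2 * m + 1) (List.replicate m 1) [2 * m + 1]
  have hadj : ∀ x y (hx : x < 2 * (2 * m + 1)) (hy : y < 2 * (2 * m + 1)),
      x ≠ y ∧ ((x + y = 4 * m + 1 ∧ m ≤ x ∧ m ≤ y) ∨ x + y = 2 * m ∨ x + y = 6 * m + 2) →
        G.Reachable ⟨x, hx⟩ ⟨y, hy⟩ :=
    fun x y hx hy h => ((meanderC_replicate_one_adj_iff _ _).2 h).reachable
  have hend : ∀ u : Fin (2 * (2 * m + 1)), u.val ≤ m → (G.neighborSet u).ncard ≠ 2 := by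
    intro u hu
    have : (G.neighborSet u).ncard ≤ 1 := by
      refine (Set.ncard_le_one (Set.toFinite _)).2 fun z hz z' hz' => Fin.ext ?_
      rw [mem_neighborSet, meanderC_replicate_one_adj_iff] at hz hz'
      omega
    omega
  -- each component is a path `u — 2m-u — 2m+1+u — 4m+1-u = σ u` or `m — 3m+1 = σ m`
  have hpath : ∀ v : Fin (2 * (2 * m + 1)), v.val ≤ 2 * m →
      ∃ u : Fin (2 * (2 * m + 1)), u.val ≤ m ∧ G.Reachable u v ∧
        G.Reachable u (sigmaRefl _ v) := by
    intro v hv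
    have hσ : sigmaRefl _ v = ⟨4 * m + 1 - v, by omega⟩ :=
      Fin.ext (by simp only [sigmaRefl]; omega)
    rw [hσ]
    rcases lt_trichotomy v.val m with hvm | hvm | hvm
    · refine ⟨v, hvm.le, Reachable.refl v, ?_⟩
      exact ((hadj v (2 * m - v) v.isLt (by omega) (by omega)).trans
        (hadj _ (2 * m + 1 + v) _ (by omega) (by omega))).trans (hadj _ _ _ _ (by omega))
    · exact ⟨v, hvm.le, Reachable.refl v, hadj v _ v.isLt _ (by omega)⟩
    · refine ⟨⟨2 * m - v, by omega⟩, by simp only; omega, hadj _ v _ v.isLt (by omega), ?_⟩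
      exact (hadj _ v _ v.isLt (by omega)).trans (hadj v _ v.isLt _ (by omega))
  rw [topIndex_eq_zero_iff]
  intro v
  obtain ⟨u, hu, huv, huσ⟩ : ∃ u : Fin (2 * (2 * m + 1)), u.val ≤ m ∧ G.Reachable u v ∧
      G.Reachable u (sigmaRefl _ v) := by
    by_cases hv : v.val ≤ 2 * m
    · exact hpath v hv
    · obtain ⟨u, hu, h1, h2⟩ := hpath (sigmaRefl _ v) (by simp only [sigmaRefl]; omega)
      exact ⟨u, hu, by rwa [sigmaRefl_sigmaRefl] at h2, h1⟩
  exact ⟨⟨u, huv.symm, hend u hu⟩, huv.symm.trans huσ⟩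

end AllOnes

section Counting

lemma IsComposition.eq_replicate_one_or_exists_arcs {a : List ℕ} (ha : IsComposition a) :
    a = List.replicate a.sum 1 ∨ ∃ i j, arcs a 0 i j := by
  by_cases h : ∀ x ∈ a, x = 1
  · left
    have ha1 := List.eq_replicate_of_mem h
    rw [ha1, List.sum_replicate, smul_eq_mul, mul_one]
  · push Not at h
    obtain ⟨x, hx, hx1⟩ := h
    exact Or.inr (exists_arcs_of_two_le hx (by have := ha x hx; omega))

lemma finite_setOf_isComposition (s : ℕ) :
    {l : List ℕ | IsComposition l ∧ l.sum = s}.Finite := by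
  rw [← Set.finite_coe_iff]
  refine Finite.of_injective (fun l => (⟨l.1, fun hi => l.2.1 _ hi, l.2.2⟩ : Composition s)) ?_
  intro l l' h
  exact Subtype.ext (congrArg Composition.blocks h)

lemma topIndex_comm (n : ℕ) (a b : List ℕ) : topIndex n b a = topIndex n a b := by
  have : meanderC n b a = meanderC n a b := by
    ext
    simp only [meanderC, meanderA]
    tauto
  unfold topIndex numCycles numNonStableSegments
  rw [this]

lemma FrobDatum.symm {n k : ℕ} {a b : List ℕ} (h : FrobDatum n k a b) : FrobDatum n k b a :=
  let ⟨ha, hb, hk, hkn, hsum, hT⟩ := h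
  ⟨hb, ha, hk, hkn, hsum.symm, by rwa [topIndex_comm]⟩

lemma FrobDatum.sum_eq_of_sum_eq {n k : ℕ} {a b : List ℕ} (h : FrobDatum n k a b)
    (ha : a.sum = n - k) : b.sum = n := by
  obtain ⟨-, -, hk, hkn, hsum, -⟩ := h
  omega

/-- Representatives of `FSet n k`: since `k ≥ 1`, an unordered datum has exactly one orientation
with `Σ a = n - k`. -/
def orientedFData (n k : ℕ) : Set (List ℕ × List ℕ) :=
  {p | FrobDatum n k p.1 p.2 ∧ p.1.sum = n - k}

lemma mem_orientedFData {n k : ℕ} {a b : List ℕ} :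
    (a, b) ∈ orientedFData n k ↔ FrobDatum n k a b ∧ a.sum = n - k :=
  Iff.rfl

lemma orientedFData_finite (n k : ℕ) : (orientedFData n k).Finite := by
  refine ((finite_setOf_isComposition (n - k)).prod (finite_setOf_isComposition n)).subset ?_
  rintro ⟨a, b⟩ hab
  obtain ⟨h, ha⟩ := mem_orientedFData.1 hab
  exact ⟨⟨h.1, ha⟩, h.2.1, h.sum_eq_of_sum_eq ha⟩

lemma Fcount_eq_ncard_orientedFData (n k : ℕ) : Fcount n k = (orientedFData n k).ncard := by
  have himage : FSet n k = (fun p : List ℕ × List ℕ => s(p.1, p.2)) '' orientedFData n k := by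
    ext s
    constructor
    · rintro ⟨a, b, rfl, h⟩
      by_cases ha : a.sum = n - k
      · exact ⟨(a, b), ⟨h, ha⟩, rfl⟩
      · have hb : b.sum = n - k := by obtain ⟨-, -, -, -, hsum, -⟩ := h; omega
        exact ⟨(b, a), ⟨h.symm, hb⟩, Sym2.eq_swap⟩
    · rintro ⟨⟨a, b⟩, ⟨h, -⟩, rfl⟩
      exact ⟨a, b, rfl, h⟩
  have hinj : Set.InjOn (fun p : List ℕ × List ℕ => s(p.1, p.2)) (orientedFData n k) := by
    rintro ⟨a, b⟩ hab ⟨a', b'⟩ hab' heq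
    obtain ⟨h, ha⟩ := mem_orientedFData.1 hab
    obtain ⟨-, ha'⟩ := mem_orientedFData.1 hab'
    rcases Sym2.eq_iff.1 heq with ⟨rfl, rfl⟩ | ⟨rfl, rfl⟩
    · rfl
    · have := h.sum_eq_of_sum_eq ha
      obtain ⟨-, -, hk, hkn, -⟩ := h
      dsimp only at ha'
      omega
  rw [Fcount, himage, hinj.ncard_image]

variable {m : ℕ}

lemma append_one_mem_orientedFData_succ (hm : 1 ≤ m) {a b : List ℕ}
    (h : (a, b) ∈ orientedFData (2 * m) m) : (a, b ++ [1]) ∈ orientedFData (2 * m + 1) (m + 1) := by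
  obtain ⟨h, hsa⟩ := mem_orientedFData.1 h
  have hsb := h.sum_eq_of_sum_eq hsa
  obtain ⟨ha, hb, -, -, -, hT⟩ := h
  rw [show 2 * m - m = m by omega] at hsa
  refine mem_orientedFData.2 ⟨⟨ha, hb.append_singleton one_pos, by omega, by omega,
    Or.inl ⟨by omega, by simp [hsb]⟩, (topIndex_append_one_eq_zero_iff hm ha hsa hb hsb).2 hT⟩,
    by omega⟩

lemma replicate_one_mem_orientedFData_succ :
    (List.replicate m 1, [2 * m + 1]) ∈ orientedFData (2 * m + 1) (m + 1) :=
  mem_orientedFData.2 ⟨⟨IsComposition.replicate_one m, by simp [IsComposition], by omega,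
    by omega, Or.inl ⟨by simp; omega, by simp⟩, topIndex_replicate_one⟩, by simp; omega⟩

lemma mem_orientedFData_succ (hm : 1 ≤ m) {a b : List ℕ}
    (h : (a, b) ∈ orientedFData (2 * m + 1) (m + 1)) :
    (a = List.replicate m 1 ∧ b = [2 * m + 1]) ∨
      ∃ b₀, (a, b₀) ∈ orientedFData (2 * m) m ∧ b = b₀ ++ [1] := by
  obtain ⟨h, hsa⟩ := mem_orientedFData.1 h
  have hsb := h.sum_eq_of_sum_eq hsa
  obtain ⟨ha, hb, -, -, -, hT⟩ := h
  rw [show 2 * m + 1 - (m + 1) = m by omega] at hsa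
  obtain rfl | ⟨b₀, p, rfl⟩ := List.eq_nil_or_concat' b
  · simp at hsb
  have hb₀ : IsComposition b₀ := fun x hx => hb x (by simp [hx])
  have hp : 0 < p := hb p (by simp)
  simp only [List.sum_append, List.sum_singleton] at hsb
  rcases (by omega : p = 1 ∨ (2 ≤ p ∧ p ≤ 2 * m) ∨ p = 2 * m + 1) with rfl | hp | rfl
  · refine Or.inr ⟨b₀, mem_orientedFData.2
      ⟨⟨ha, hb₀, hm, by omega, Or.inl ⟨by omega, by omega⟩, ?_⟩, by omega⟩, rfl⟩
    exact (topIndex_append_one_eq_zero_iff hm ha hsa hb₀ (by omega)).1 hT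
  · exact (topIndex_append_ne_zero_of_two_le ha hsa hb₀ hp.1 hp.2 hsb hT).elim
  · obtain rfl := hb₀.eq_nil (by omega)
    rcases ha.eq_replicate_one_or_exists_arcs with ha1 | ⟨i, j, hij⟩
    · exact Or.inl ⟨by rw [ha1, hsa], rfl⟩
    · exact (topIndex_singleton_ne_zero_of_arcs ha hsa hij hT).elim

lemma orientedFData_succ (hm : 1 ≤ m) :
    orientedFData (2 * m + 1) (m + 1) = insert (List.replicate m 1, [2 * m + 1])
      ((fun p : List ℕ × List ℕ => (p.1, p.2 ++ [1])) '' orientedFData (2 * m) m) := by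
  ext ⟨a, b⟩
  simp only [Set.mem_insert_iff, Set.mem_image, Prod.mk.injEq, Prod.exists]
  constructor
  · intro hab
    rcases mem_orientedFData_succ hm hab with h | ⟨b₀, h, rfl⟩
    exacts [Or.inl h, Or.inr ⟨a, b₀, h, rfl, rfl⟩]
  · rintro (⟨rfl, rfl⟩ | ⟨a, b₀, h, rfl, rfl⟩)
    exacts [replicate_one_mem_orientedFData_succ, append_one_mem_orientedFData_succ hm h]

end Counting

/-- `F_{2m+1,m+1} = F_{2m,m} + 1` for all `m ≥ 1`. -/
theorem Fcount_step (m : ℕ) (hm : 1 ≤ m) :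
    Fcount (2 * m + 1) (m + 1) = Fcount (2 * m) m + 1 := by
  have hinj : Function.Injective fun p : List ℕ × List ℕ => (p.1, p.2 ++ [1]) :=
    Function.injective_id.prodMap (List.append_left_injective [1])
  have hnew : (List.replicate m 1, [2 * m + 1]) ∉
      (fun p : List ℕ × List ℕ => (p.1, p.2 ++ [1])) '' orientedFData (2 * m) m := by
    rintro ⟨⟨a, b⟩, -, heq⟩
    simp [List.append_eq_singleton_iff] at heq
    omega
  rw [Fcount_eq_ncard_orientedFData, Fcount_eq_ncard_orientedFData, orientedFData_succ hm,
    Set.ncard_insert_of_notMem hnew ((orientedFData_finite _ _).image _),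
    Set.ncard_image_of_injective _ hinj]
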